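/- arXiv:1602.04758 — 5 statements merged into one kernel-verified Lean document; each statement's English description precedes it below -/
import Mathlib

section
/- Let B' ∈ 𝐒₁ be defined as follows: for every A ∈ 𝐒 and every f ≥ 0, the supremum defining H(A,f) = sup_{B ∈ 𝐒₁} (−B:A + f·(det B)^{1/d}) is attained, and moreover there exists a maximizer B' ∈ 𝐒₁ of this supremum which commutes with A, i.e. A·B' = B'·A. -/
open Matrix Set

/-- The set 𝐒₁ of positive semidefinite symmetric d×d real matrices with unit trace. -/
def S1set (d : ℕ) : Set (Matrix (Fin d) (Fin d) ℝ) :=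
  {B | B.PosSemidef ∧ B.trace = 1}

/-- The value −B:A + f·(det B)^(1/d) appearing under the supremum of the Bellman operator. -/
noncomputable def bval (d : ℕ) (A B : Matrix (Fin d) (Fin d) ℝ) (f : ℝ) : ℝ :=
  -((B * A).trace) + f * B.det ^ ((1 : ℝ) / d)

/-- The Bellman operator H(A,f) = sup_{B ∈ 𝐒₁} (−B:A + f·(det B)^(1/d)). -/
noncomputable def bellman (d : ℕ) (A : Matrix (Fin d) (Fin d) ℝ) (f : ℝ) : ℝ :=
  sSup ((fun B => bval d A B f) '' S1set d)

/-- The Monge–Ampère operator M(A,f) = (f/d)^d − det A. -/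
noncomputable def MAop (d : ℕ) (A : Matrix (Fin d) (Fin d) ℝ) (f : ℝ) : ℝ :=
  (f / d) ^ d - A.det

/-- The Hessian matrix D²φ(x) of φ : ℝ^d → ℝ at x. -/
noncomputable def hessianM (d : ℕ) (φ : (Fin d → ℝ) → ℝ) (x : Fin d → ℝ) :
    Matrix (Fin d) (Fin d) ℝ :=
  fun i j => iteratedFDeriv ℝ 2 φ x ![Pi.single i 1, Pi.single j 1]

/-
A maximizer `B₀` exists because `𝐒₁` is compact and the objective is continuous. Diagonalize
`A = U diag(μ) Uᵀ` and replace `B₀` by its pinching `B' = U diag((UᵀB₀U)ᵢᵢ) Uᵀ`. This keeps the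
trace, positivity and the pairing `B:A = ∑ μᵢ (UᵀB₀U)ᵢᵢ`, while Hadamard's inequality
`det C ≤ ∏ Cᵢᵢ` for positive semidefinite `C` shows that the determinant can only grow. As
`f ≥ 0`, `B'` is again a maximizer, and it commutes with `A` since both are diagonal in the
basis `U`.
-/

open Unitary

namespace Matrix.PosSemidef

variable {n : Type*} {B : Matrix n n ℝ}

lemma sq_apply_le_mul_diag (hB : B.PosSemidef) (i j : n) : B i j ^ 2 ≤ B i i * B j j := by
  have h := (hB.submatrix ![i, j]).det_nonneg
  rw [det_fin_two] at h
  simp only [submatrix_apply, Matrix.cons_val_zero, Matrix.cons_val_one] at h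
  rw [← hB.1.apply j i, star_trivial] at h
  nlinarith

lemma apply_eq_zero_of_diag_eq_zero (hB : B.PosSemidef) {i : n} (hi : B i i = 0) (j : n) :
    B i j = 0 := by
  have h := hB.sq_apply_le_mul_diag i j
  rw [hi, zero_mul] at h
  exact pow_eq_zero_iff two_ne_zero |>.mp (le_antisymm h (sq_nonneg _))

variable [Fintype n] [DecidableEq n]

lemma det_le_one_of_diag_eq_one (hB : B.PosSemidef) (hdiag : ∀ i, B i i = 1) : B.det ≤ 1 := by
  rcases isEmpty_or_nonempty n with _ | _
  · exact det_isEmpty.le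
  set μ := hB.1.eigenvalues
  have hμ : ∀ i ∈ Finset.univ, 0 ≤ μ i := fun i _ => hB.eigenvalues_nonneg i
  have hsum : ∑ i, μ i = Fintype.card n := by
    have := hB.1.trace_eq_sum_eigenvalues
    simp_all [μ, trace]
  have hcard : (0 : ℝ) < Fintype.card n := by exact_mod_cast Fintype.card_pos
  -- AM-GM with unit weights: the eigenvalues have arithmetic mean `tr B / card n = 1`.
  have hamgm := Real.geom_mean_le_arith_mean Finset.univ (fun _ => 1) μ (by simp)
    (by simpa using hcard) hμ
  simp only [Real.rpow_one, one_mul, Finset.sum_const, Finset.card_univ, nsmul_eq_mul, mul_one,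
    hsum, div_self hcard.ne'] at hamgm
  rw [hB.1.det_eq_prod_eigenvalues]
  simpa using (Real.rpow_inv_le_iff_of_pos (Finset.prod_nonneg hμ) zero_le_one hcard).mp hamgm

/-- **Hadamard's inequality**. -/
theorem det_le_prod_diag (hB : B.PosSemidef) : B.det ≤ ∏ i, B i i := by
  by_cases hpos : ∀ i, 0 < B i i
  · -- Rescale to unit diagonal by `D = diag (B i i)^(-1/2)`.
    set s : n → ℝ := fun i => √(B i i)
    have hs : ∀ i, 0 < s i := fun i => Real.sqrt_pos.mpr (hpos i)
    set D := diagonal s⁻¹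
    have hscaled : (D * B * D).PosSemidef := by
      simpa [D] using hB.conjTranspose_mul_mul_same D
    have hunit : ∀ i, (D * B * D) i i = 1 := by
      intro i
      simp only [D, mul_diagonal, diagonal_mul, Pi.inv_apply]
      field_simp
      rw [Real.sq_sqrt (hpos i).le, div_self (hpos i).ne']
    have h1 := hscaled.det_le_one_of_diag_eq_one hunit
    rw [det_mul, det_mul, det_diagonal, Pi.inv_def, Finset.prod_inv_distrib] at h1
    have hprod : ∏ i, B i i = (∏ i, s i) * (∏ i, s i) := by
      rw [← Finset.prod_mul_distrib]
      exact Finset.prod_congr rfl fun i _ => (Real.mul_self_sqrt (hpos i).le).symm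
    have hP : 0 < ∏ i, s i := Finset.prod_pos fun i _ => hs i
    rw [hprod]
    calc B.det = (∏ i, s i)⁻¹ * B.det * (∏ i, s i)⁻¹ * ((∏ i, s i) * (∏ i, s i)) := by
          field_simp
      _ ≤ 1 * ((∏ i, s i) * (∏ i, s i)) := by gcongr
      _ = _ := one_mul _
  · push Not at hpos
    obtain ⟨i, hi⟩ := hpos
    rw [det_eq_zero_of_row_eq_zero i
      (hB.apply_eq_zero_of_diag_eq_zero (le_antisymm hi hB.diag_nonneg))]
    exact Finset.prod_nonneg fun j _ => hB.diag_nonneg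

end Matrix.PosSemidef

section Conjugation

variable {n R : Type*} [Fintype n] [DecidableEq n] [CommRing R] [StarRing R]
  (U : unitary (Matrix n n R))

lemma Matrix.trace_conjStarAlgAut (X : Matrix n n R) :
    (conjStarAlgAut R _ U X).trace = X.trace := by
  rw [conjStarAlgAut_apply, trace_mul_cycle, coe_star_mul_self, one_mul]

lemma Matrix.det_conjStarAlgAut (X : Matrix n n R) :
    (conjStarAlgAut R _ U X).det = X.det := by
  rw [conjStarAlgAut_apply, det_mul, det_mul, mul_right_comm, ← det_mul,
    mul_star_self_of_mem U.2, det_one, one_mul]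

lemma Matrix.PosSemidef.conjStarAlgAut [PartialOrder R] {X : Matrix n n R} (hX : X.PosSemidef) :
    (conjStarAlgAut R _ U X).PosSemidef := by
  rw [conjStarAlgAut_apply, star_eq_conjTranspose]
  exact hX.mul_mul_conjTranspose_same _

end Conjugation

section Pinching

variable {n : Type*} [Fintype n] [DecidableEq n] (U : unitary (Matrix n n ℝ))

noncomputable def Matrix.pinching (B : Matrix n n ℝ) : Matrix n n ℝ :=
  conjStarAlgAut ℝ _ U (diagonal ((conjStarAlgAut ℝ _ U).symm B).diag)

variable {U}

lemma Matrix.PosSemidef.pinching {B : Matrix n n ℝ} (hB : B.PosSemidef) :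
    (B.pinching U).PosSemidef := by
  have hC := (conjStarAlgAut_symm (S := ℝ) U ▸ hB.conjStarAlgAut (star U))
  exact (PosSemidef.diagonal fun i => hC.diag_nonneg).conjStarAlgAut U

lemma Matrix.trace_pinching (B : Matrix n n ℝ) : (B.pinching U).trace = B.trace := by
  rw [Matrix.pinching, trace_conjStarAlgAut, trace_diagonal, ← trace, conjStarAlgAut_symm,
    trace_conjStarAlgAut]

lemma Matrix.commute_pinching (μ : n → ℝ) (B : Matrix n n ℝ) :
    Commute (conjStarAlgAut ℝ _ U (diagonal μ)) (B.pinching U) :=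
  (commute_diagonal μ _).map _

lemma Matrix.trace_pinching_mul (μ : n → ℝ) (B : Matrix n n ℝ) :
    (B.pinching U * conjStarAlgAut ℝ _ U (diagonal μ)).trace =
      (B * conjStarAlgAut ℝ _ U (diagonal μ)).trace := by
  set C := (conjStarAlgAut ℝ _ U).symm B
  calc (B.pinching U * conjStarAlgAut ℝ _ U (diagonal μ)).trace
      = (diagonal C.diag * diagonal μ).trace := by
        rw [Matrix.pinching, ← map_mul, trace_conjStarAlgAut]
    _ = (C * diagonal μ).trace := by simp [trace, mul_diagonal]
    _ = (B * conjStarAlgAut ℝ _ U (diagonal μ)).trace := by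
        rw [← trace_conjStarAlgAut U, map_mul, StarAlgEquiv.apply_symm_apply]

lemma Matrix.PosSemidef.det_le_det_pinching {B : Matrix n n ℝ} (hB : B.PosSemidef) :
    B.det ≤ (B.pinching U).det := by
  have hC := (conjStarAlgAut_symm (S := ℝ) U ▸ hB.conjStarAlgAut (star U))
  rw [Matrix.pinching, det_conjStarAlgAut, det_diagonal, ← det_conjStarAlgAut (star U),
    ← conjStarAlgAut_symm]
  exact hC.det_le_prod_diag

end Pinching

lemma Matrix.isClosed_setOf_posSemidef (n : Type*) [Fintype n] :
    IsClosed {B : Matrix n n ℝ | B.PosSemidef} := by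
  simp only [posSemidef_iff_dotProduct_mulVec, Set.ofPred_and, Set.ofPred_forall]
  exact (isClosed_eq continuous_id.matrix_conjTranspose continuous_id).inter <|
    isClosed_iInter fun x => isClosed_le continuous_const <|
      continuous_const.dotProduct (continuous_id.matrix_mulVec continuous_const)

lemma isCompact_S1set (d : ℕ) : IsCompact (S1set d) := by
  have hclosed : IsClosed (S1set d) :=
    (isClosed_setOf_posSemidef _).inter (isClosed_eq continuous_id.matrix_trace continuous_const)
  refine (isCompact_Icc (a := (-1 : ℝ)) (b := 1)).matrix.of_isClosed_subset hclosed ?_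
  rintro B ⟨hB, htr⟩ i j
  have hdiag_le : ∀ k, B k k ≤ 1 := fun k => htr ▸
    Finset.single_le_sum (f := fun k => B k k) (fun k _ => hB.diag_nonneg) (Finset.mem_univ k)
  constructor <;> nlinarith [hB.sq_apply_le_mul_diag i j, hB.diag_nonneg (i := i),
    hB.diag_nonneg (i := j), hdiag_le i, hdiag_le j]

lemma S1set_nonempty {d : ℕ} (hd : 0 < d) : (S1set d).Nonempty :=
  ⟨diagonal fun _ => (d : ℝ)⁻¹, PosSemidef.diagonal fun _ => by positivity, by
    simp [trace_diagonal, hd.ne']⟩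

lemma continuous_bval (d : ℕ) (A : Matrix (Fin d) (Fin d) ℝ) (f : ℝ) :
    Continuous fun B => bval d A B f :=
  ((continuous_id.matrix_mul continuous_const).matrix_trace).neg.add <|
    continuous_const.mul <| (Real.continuous_rpow_const (by positivity)).comp
      continuous_id.matrix_det

lemma pinching_mem_S1set {d : ℕ} (U : unitary (Matrix (Fin d) (Fin d) ℝ))
    {B : Matrix (Fin d) (Fin d) ℝ} (hB : B ∈ S1set d) : B.pinching U ∈ S1set d :=
  ⟨hB.1.pinching, (trace_pinching B).trans hB.2⟩

lemma bval_le_bval_pinching {d : ℕ} (U : unitary (Matrix (Fin d) (Fin d) ℝ)) (μ : Fin d → ℝ)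
    {B : Matrix (Fin d) (Fin d) ℝ} (hB : B.PosSemidef) {f : ℝ} (hf : 0 ≤ f) :
    bval d (conjStarAlgAut ℝ _ U (diagonal μ)) B f ≤
      bval d (conjStarAlgAut ℝ _ U (diagonal μ)) (B.pinching U) f := by
  unfold bval
  rw [trace_pinching_mul]
  gcongr
  · exact hB.det_nonneg
  · exact hB.det_le_det_pinching

/-- For every symmetric A and f ≥ 0, the supremum defining H(A,f) is attained, and there
is a maximizer B' ∈ 𝐒₁ which commutes with A. -/
theorem stmt_0 (d : ℕ) (hd : 2 ≤ d) (A : Matrix (Fin d) (Fin d) ℝ) (hA : A.IsSymm)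
    (f : ℝ) (hf : 0 ≤ f) :
    ∃ B' ∈ S1set d, bval d A B' f = bellman d A f ∧ A * B' = B' * A := by
  obtain ⟨U, μ, rfl⟩ : ∃ (U : unitary (Matrix (Fin d) (Fin d) ℝ)) (μ : Fin d → ℝ),
      A = conjStarAlgAut ℝ _ U (diagonal μ) :=
    ⟨_, _, (isHermitian_iff_isSymm.mpr hA).spectral_theorem⟩
  obtain ⟨B₀, hB₀, hmax⟩ := (isCompact_S1set d).exists_isMaxOn (S1set_nonempty (by omega))
    (continuous_bval d _ f).continuousOn
  have hgreatest : IsGreatest ((fun B => bval d _ B f) '' S1set d)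
      (bval d _ (B₀.pinching U) f) :=
    ⟨⟨_, pinching_mem_S1set U hB₀, rfl⟩, by
      rintro _ ⟨B, hB, rfl⟩
      exact (hmax hB).trans (bval_le_bval_pinching U μ hB₀.1 hf)⟩
  exact ⟨_, pinching_mem_S1set U hB₀, hgreatest.csSup_eq.symm, commute_pinching μ B₀⟩
end

section
/- Let f ≥ 0 be a real number and A ∈ 𝐒. Then H(A,f) = 0 holds if and only if M(A,f) = 0 and A ∈ 𝐒₊. -/
open Matrix Set

/-!
For positive semidefinite `A` and `B`, AM–GM on the eigenvalues of `√A B √A` gives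
`d (det A det B)^(1/d) ≤ tr (B A)`. Hence `H(A,f) ≤ 0` whenever `A ⪰ 0` and `(f/d)^d ≤ det A`;
if moreover `(f/d)^d = det A`, the value `0` is attained at `B ∝ A⁻¹`, or at the projection onto
a kernel vector of `A` when `det A = 0`. Conversely, if `A` has a negative direction `v`, then
`B = v vᵀ / |v|²` has determinant `0` (as `d ≥ 2`) and makes the value positive; and if `A` is
positive definite with `det A < (f/d)^d`, then `B ∝ A⁻¹` does.

The two remaining strict cases follow from the shift identity `bval (A + t I) B = bval A B - t`
on `tr B = 1`, since `det (A ± ε I)` depends continuously on `ε`: if `det A < (f/d)^d`, the same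
holds for the positive definite `A + ε I`, so `H(A,f) > ε`; if `(f/d)^d < det A`, then
`A - ε I` is still positive semidefinite with `(f/d)^d ≤ det (A - ε I)`, so `H(A,f) ≤ -ε`.
-/

open scoped MatrixOrder

namespace Matrix

variable {n : Type*} [Fintype n] [DecidableEq n]

theorem PosSemidef.det_rpow_inv_card_le_trace_div [Nonempty n] {B : Matrix n n ℝ}
    (hB : B.PosSemidef) :
    B.det ^ (Fintype.card n : ℝ)⁻¹ ≤ B.trace / Fintype.card n := by
  have amgm := Real.geom_mean_le_arith_mean Finset.univ (fun _ => 1) hB.1.eigenvalues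
    (fun _ _ => zero_le_one) (by simp [Fintype.card_pos]) (fun i _ => hB.eigenvalues_nonneg i)
  simpa [hB.1.det_eq_prod_eigenvalues, hB.1.trace_eq_sum_eigenvalues] using amgm

theorem PosSemidef.trace_mul_eq_trace_sqrt_mul_mul_sqrt {A : Matrix n n ℝ} (hA : A.PosSemidef)
    (B : Matrix n n ℝ) : (B * A).trace = (CFC.sqrt A * B * CFC.sqrt A).trace := by
  rw [trace_mul_cycle, CFC.sqrt_mul_sqrt_self A hA.nonneg, trace_mul_comm]

theorem PosSemidef.sqrt_mul_mul_sqrt {B : Matrix n n ℝ} (hB : B.PosSemidef) (A : Matrix n n ℝ) :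
    (CFC.sqrt A * B * CFC.sqrt A).PosSemidef := by
  have hS := (nonneg_iff_posSemidef.mp (CFC.sqrt_nonneg A)).1
  have := hB.mul_mul_conjTranspose_same (CFC.sqrt A)
  rwa [hS.eq] at this

theorem PosSemidef.trace_mul_nonneg {A B : Matrix n n ℝ} (hA : A.PosSemidef)
    (hB : B.PosSemidef) : 0 ≤ (B * A).trace := by
  rw [hA.trace_mul_eq_trace_sqrt_mul_mul_sqrt]
  exact (hB.sqrt_mul_mul_sqrt A).trace_nonneg

theorem PosSemidef.det_mul_det_rpow_inv_card_le_trace_mul_div [Nonempty n] {A B : Matrix n n ℝ}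
    (hA : A.PosSemidef) (hB : B.PosSemidef) :
    (A.det * B.det) ^ (Fintype.card n : ℝ)⁻¹ ≤ (B * A).trace / Fintype.card n := by
  have hdet : (CFC.sqrt A * B * CFC.sqrt A).det = A.det * B.det := by
    rw [det_mul, det_mul, mul_right_comm, ← det_mul, CFC.sqrt_mul_sqrt_self A hA.nonneg]
  rw [hA.trace_mul_eq_trace_sqrt_mul_mul_sqrt, ← hdet]
  exact (hB.sqrt_mul_mul_sqrt A).det_rpow_inv_card_le_trace_div

theorem PosSemidef.le_trace_mul {A B : Matrix n n ℝ} {r : ℝ} (hA : (A - r • 1).PosSemidef)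
    (hB : B.PosSemidef) : r * B.trace ≤ (B * A).trace := by
  have := hA.trace_mul_nonneg hB
  rwa [mul_sub, trace_sub, Matrix.mul_smul, mul_one, trace_smul, smul_eq_mul, sub_nonneg] at this

theorem IsHermitian.exists_posSemidef_sub_smul_one {A : Matrix n n ℝ} (hA : A.IsHermitian) :
    ∃ r : ℝ, (A - r • 1).PosSemidef := by
  obtain ⟨r, hr⟩ := (finite_real_spectrum (A := A)).bddBelow
  refine ⟨r, ?_⟩
  have := algebraMap_le_of_le_spectrum (R := ℝ) (a := A) hr hA.isSelfAdjoint
  rwa [le_iff, Algebra.algebraMap_eq_smul_one] at this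

theorem PosDef.exists_pos_posSemidef_sub_smul_one [Nonempty n] {A : Matrix n n ℝ}
    (hA : A.PosDef) : ∃ r : ℝ, 0 < r ∧ (A - r • 1).PosSemidef := by
  obtain ⟨r, hr, hle⟩ := (CFC.exists_pos_algebraMap_le_iff hA.isHermitian.isSelfAdjoint).2
    fun _ hx => (isStrictlyPositive_iff_posDef.2 hA).spectrum_pos hx
  rw [le_iff, Algebra.algebraMap_eq_smul_one] at hle
  exact ⟨r, hr, hle⟩

end Matrix

open Topology

section Bellman

variable {d : ℕ} {A B : Matrix (Fin d) (Fin d) ℝ} {f : ℝ}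

theorem bval_add_smul_one (hB : B.trace = 1) (t : ℝ) :
    bval d (A + t • 1) B f = bval d A B f - t := by
  simp only [bval, Matrix.mul_add, Matrix.mul_smul, trace_add, trace_smul, hB,
    smul_eq_mul, mul_one]
  ring

theorem smul_vecMulVec_mem_S1set {x : Fin d → ℝ} (hx : x ≠ 0) :
    (x ⬝ᵥ x)⁻¹ • vecMulVec x x ∈ S1set d := by
  have hxx : 0 < x ⬝ᵥ x := by simpa using dotProduct_self_star_pos_iff.2 hx
  have hxx' : (vecMulVec x x).PosSemidef := by simpa using posSemidef_vecMulVec_self_star x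
  refine ⟨hxx'.smul (by positivity), ?_⟩
  rw [trace_smul, trace_vecMulVec, smul_eq_mul, inv_mul_cancel₀ hxx.ne']

theorem trace_smul_vecMulVec_mul (c : ℝ) (x : Fin d → ℝ) :
    ((c • vecMulVec x x) * A).trace = c * (x ⬝ᵥ A *ᵥ x) := by
  rw [Matrix.smul_mul, trace_smul, vecMulVec_mul, trace_vecMulVec, dotProduct_mulVec,
    dotProduct_comm, smul_eq_mul]

theorem exists_bval_pos_of_not_posSemidef (hd : 2 ≤ d) (hA : A.IsHermitian)
    (hA' : ¬A.PosSemidef) : ∃ B ∈ S1set d, 0 < bval d A B f := by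
  have : Nontrivial (Fin d) := Fin.nontrivial_iff_two_le.2 hd
  obtain ⟨x, hx⟩ : ∃ x, x ⬝ᵥ A *ᵥ x < 0 := by
    by_contra! h
    exact hA' (.of_dotProduct_mulVec_nonneg hA fun x => by simpa using h x)
  have hx0 : x ≠ 0 := by rintro rfl; simp at hx
  refine ⟨_, smul_vecMulVec_mem_S1set hx0, ?_⟩
  have hxx : 0 < x ⬝ᵥ x := by simpa using dotProduct_self_star_pos_iff.2 hx0
  rw [bval, trace_smul_vecMulVec_mul, det_smul, det_vecMulVec, mul_zero,
    Real.zero_rpow (by positivity), mul_zero, add_zero, neg_pos]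
  exact mul_neg_of_pos_of_neg (inv_pos.2 hxx) hx

variable [NeZero d]

theorem div_pow_le_iff_le_mul_rpow {x : ℝ} (hf : 0 ≤ f) (hx : 0 ≤ x) :
    (f / d) ^ d ≤ x ↔ f ≤ d * x ^ ((1 : ℝ) / d) := by
  have hdR : (0 : ℝ) < d := Nat.cast_pos.2 (NeZero.pos d)
  rw [← div_le_iff₀' hdR, one_div, Real.le_rpow_inv_iff_of_pos (by positivity) hx hdR,
    Real.rpow_natCast]

theorem smul_one_mem_S1set : ((d : ℝ)⁻¹ • 1 : Matrix (Fin d) (Fin d) ℝ) ∈ S1set d :=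
  ⟨PosSemidef.one.smul (by positivity), by simp⟩

theorem bval_nonpos (hA : A.PosSemidef) (hf : 0 ≤ f) (hAf : (f / d) ^ d ≤ A.det)
    (hB : B.PosSemidef) : bval d A B f ≤ 0 := by
  have amgm := hA.det_mul_det_rpow_inv_card_le_trace_mul_div hB
  rw [Fintype.card_fin, Real.mul_rpow hA.det_nonneg hB.det_nonneg, ← one_div,
    le_div_iff₀' (Nat.cast_pos.2 (NeZero.pos d))] at amgm
  have hfA := (div_pow_le_iff_le_mul_rpow hf hA.det_nonneg).1 hAf
  have hBpow : 0 ≤ B.det ^ ((1 : ℝ) / d) := Real.rpow_nonneg hB.det_nonneg _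
  have := mul_le_mul_of_nonneg_right hfA hBpow
  unfold bval
  linarith

theorem bddAbove_bval (hA : A.IsHermitian) (hf : 0 ≤ f) :
    BddAbove ((fun B => bval d A B f) '' S1set d) := by
  obtain ⟨r, hr⟩ := hA.exists_posSemidef_sub_smul_one
  refine ⟨-r + f / d, Set.forall_mem_image.2 fun B ⟨hB, htr⟩ => ?_⟩
  have hBA := hr.le_trace_mul hB
  have hdet := hB.det_rpow_inv_card_le_trace_div
  rw [htr, mul_one] at hBA
  rw [htr, Fintype.card_fin, ← one_div] at hdet
  have := mul_le_mul_of_nonneg_left hdet hf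
  rw [mul_one_div] at this
  unfold bval
  linarith

theorem le_bellman (hA : A.IsHermitian) (hf : 0 ≤ f) (hB : B ∈ S1set d) :
    bval d A B f ≤ bellman d A f :=
  le_csSup (bddAbove_bval hA hf) (Set.mem_image_of_mem _ hB)

theorem bellman_le {c : ℝ} (h : ∀ B ∈ S1set d, bval d A B f ≤ c) :
    bellman d A f ≤ c :=
  csSup_le ((Set.nonempty_of_mem smul_one_mem_S1set).image _) (Set.forall_mem_image.2 h)

theorem Matrix.PosDef.exists_bval_eq (hA : A.PosDef) (f : ℝ) :
    ∃ B ∈ S1set d, ∃ c > 0, bval d A B f = c * (f - d * A.det ^ ((1 : ℝ) / d)) := by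
  have htr : 0 < A⁻¹.trace := hA.inv.trace_pos
  have hdet := hA.det_pos
  set c := A⁻¹.trace⁻¹
  set q := A.det ^ ((1 : ℝ) / d)
  have hq : 0 < q := Real.rpow_pos_of_pos hdet _
  refine ⟨c • A⁻¹, ⟨hA.inv.posSemidef.smul (by positivity), ?_⟩, c / q, by positivity,
    ?_⟩
  · rw [trace_smul, smul_eq_mul, inv_mul_cancel₀ htr.ne']
  have hdetB : (c • A⁻¹).det ^ ((1 : ℝ) / d) = c / q := by
    rw [det_smul, det_nonsing_inv, Ring.inverse_eq_inv, Fintype.card_fin,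
      Real.mul_rpow (by positivity) (by positivity), one_div, Real.pow_rpow_inv_natCast
      (by positivity) (NeZero.ne d), Real.inv_rpow hdet.le]
    simp only [q, one_mul, div_eq_mul_inv]
  rw [bval, Matrix.smul_mul, nonsing_inv_mul _ hdet.ne'.isUnit, trace_smul, trace_one,
    Fintype.card_fin, hdetB, smul_eq_mul]
  field_simp
  ring

theorem Matrix.PosDef.exists_bval_le_neg (hA : A.PosDef) (hf : 0 ≤ f)
    (hAf : (f / d) ^ d < A.det) : ∃ ε > 0, ∀ B ∈ S1set d, bval d A B f ≤ -ε := by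
  obtain ⟨r, hr, hAr⟩ := hA.exists_pos_posSemidef_sub_smul_one
  have hcont : Continuous fun ε : ℝ => (A - ε • 1).det := by fun_prop
  have hdet : ∀ᶠ ε in 𝓝[>] (0 : ℝ), (f / d) ^ d < (A - ε • 1).det :=
    ((hcont.tendsto' 0 _ (by simp)).eventually (lt_mem_nhds hAf)).filter_mono nhdsWithin_le_nhds
  obtain ⟨ε, hdetε, hε, hεr⟩ := (hdet.and (Ioc_mem_nhdsGT hr)).exists
  refine ⟨ε, hε, fun B ⟨hB, htr⟩ => ?_⟩
  have hAε : (A - ε • 1).PosSemidef := by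
    have := hAr.add (PosSemidef.one.smul (sub_nonneg.2 hεr))
    rwa [sub_smul, sub_add_sub_cancel] at this
  have := bval_add_smul_one (A := A - ε • 1) (f := f) htr ε
  rw [sub_add_cancel] at this
  linarith [bval_nonpos hAε hf hdetε.le hB]

theorem Matrix.PosSemidef.exists_bval_pos (hA : A.PosSemidef) (hf : 0 ≤ f)
    (hAf : A.det < (f / d) ^ d) : ∃ B ∈ S1set d, 0 < bval d A B f := by
  have hcont : Continuous fun ε : ℝ => (A + ε • 1).det := by fun_prop
  have hdet : ∀ᶠ ε in 𝓝[>] (0 : ℝ), (A + ε • 1).det < (f / d) ^ d :=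
    ((hcont.tendsto' 0 _ (by simp)).eventually (gt_mem_nhds hAf)).filter_mono nhdsWithin_le_nhds
  obtain ⟨ε, hdetε, hε⟩ := (hdet.and self_mem_nhdsWithin).exists
  have hAε : (A + ε • 1).PosDef := PosDef.posSemidef_add hA (PosDef.one.smul hε)
  obtain ⟨B, hB, c, hc, hval⟩ := hAε.exists_bval_eq f
  have hfq := (div_pow_le_iff_le_mul_rpow hf hAε.det_pos.le).not.1 hdetε.not_ge
  refine ⟨B, hB, ?_⟩
  have := bval_add_smul_one (A := A) (f := f) hB.2 ε
  nlinarith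

theorem Matrix.PosSemidef.exists_bval_eq_zero (hA : A.PosSemidef) (hf : 0 ≤ f)
    (hAf : A.det = (f / d) ^ d) : ∃ B ∈ S1set d, bval d A B f = 0 := by
  by_cases hdet : A.det = 0
  · obtain ⟨x, hx0, hAx⟩ := exists_mulVec_eq_zero_iff.2 hdet
    have hf0 : f = 0 := by simpa [hdet, NeZero.ne d, eq_comm (a := (0 : ℝ))] using hAf
    refine ⟨_, smul_vecMulVec_mem_S1set hx0, ?_⟩
    rw [bval, trace_smul_vecMulVec_mul, hAx, hf0]
    simp
  · obtain ⟨B, hB, c, -, hval⟩ := (hA.posDef_iff_det_ne_zero.2 hdet).exists_bval_eq f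
    refine ⟨B, hB, ?_⟩
    have hdR : (d : ℝ) ≠ 0 := Nat.cast_ne_zero.2 (NeZero.ne d)
    rw [hval, hAf, one_div, Real.pow_rpow_inv_natCast (by positivity) (NeZero.ne d),
      mul_div_cancel₀ _ hdR, sub_self, mul_zero]

end Bellman

/-- H(A,f) = 0 iff M(A,f) = 0 and A is positive semidefinite. -/
theorem stmt_1 (d : ℕ) (hd : 2 ≤ d) (A : Matrix (Fin d) (Fin d) ℝ) (hA : A.IsSymm)
    (f : ℝ) (hf : 0 ≤ f) :
    bellman d A f = 0 ↔ MAop d A f = 0 ∧ A.PosSemidef := by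
  have : NeZero d := ⟨by omega⟩
  have hH : A.IsHermitian := by rwa [IsHermitian, conjTranspose_eq_transpose_of_trivial]
  constructor
  · intro hzero
    have hpos : ∀ B ∈ S1set d, ¬0 < bval d A B f := fun B hB h =>
      (h.trans_le (le_bellman hH hf hB)).ne' hzero
    have hPSD : A.PosSemidef := by
      by_contra h
      obtain ⟨B, hB, h⟩ := exists_bval_pos_of_not_posSemidef hd hH h
      exact hpos B hB h
    refine ⟨?_, hPSD⟩
    rcases lt_trichotomy A.det ((f / d) ^ d) with hlt | heq | hgt
    · obtain ⟨B, hB, h⟩ := hPSD.exists_bval_pos hf hlt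
      exact absurd h (hpos B hB)
    · rw [MAop, heq, sub_self]
    · have hPD : A.PosDef := hPSD.posDef_iff_det_ne_zero.2 (lt_of_le_of_lt (by positivity) hgt).ne'
      obtain ⟨ε, hε, hle⟩ := hPD.exists_bval_le_neg hf hgt
      linarith [bellman_le hle]
  · rintro ⟨hM, hPSD⟩
    have hAf : A.det = (f / d) ^ d := by rw [MAop, sub_eq_zero] at hM; exact hM.symm
    obtain ⟨B, hB, hB0⟩ := hPSD.exists_bval_eq_zero hf hAf
    exact le_antisymm (bellman_le fun B hB => bval_nonpos hPSD hf hAf.ge hB.1)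
      (hB0 ▸ le_bellman hH hf hB)
end

section
/- Let Ω ⊆ ℝ^d be a bounded open set and f : Ω → [0,∞) continuous. Suppose u : Ω → ℝ is upper semicontinuous, convex on Ω, and is a viscosity subsolution of the Monge–Ampère equation on the set of convex functions, i.e. for every convex φ ∈ C²(Ω) such that u − φ attains a local maximum at a point x ∈ Ω one has M(D²φ(x), f(x)) ≤ 0. Then u is a viscosity subsolution of the Bellman equation: for every φ ∈ C²(Ω) (not necessarily convex) such that u − φ attains a local maximum at x ∈ Ω, one has H(D²φ(x), f(x)) ≤ 0. -/
open Matrix Set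

/-!
Let `A = D²φ(x)`. Since `u - φ` has a local maximum at `x` and `u` is convex, every second
difference `φ(x + tv) + φ(x - tv) - 2φ(x)` is eventually nonnegative, so `A` is positive
semidefinite. For `t > 0`, the second-order Taylor polynomial of `φ` at `x` plus `(t/2)|y - x|²`
is a convex quadratic lying above `φ` near `x` and touching it at `x`, with Hessian `A + t I`;
the Monge–Ampère subsolution property gives `(f/d)^d ≤ det (A + t I)`, hence `(f/d)^d ≤ det A`
as `t → 0`. Finally, writing `B = Cᴴ C` and applying AM–GM to the eigenvalues of `C A Cᴴ`,
`tr (B A) ≥ d (det A det B)^(1/d) ≥ f (det B)^(1/d)` for every `B ⪰ 0`, so every term of the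
supremum defining the Bellman operator is nonpositive.
-/

open Filter Topology Asymptotics Metric

section Calculus

variable {E G : Type*} [NormedAddCommGroup E] [NormedSpace ℝ E] [NormedAddCommGroup G]
  [NormedSpace ℝ G]

theorem ContDiffAt.eventually_hasFDerivAt {φ : E → G} {x : E} (hφ : ContDiffAt ℝ 2 φ x) :
    ∀ᶠ y in 𝓝 x, HasFDerivAt φ (fderiv ℝ φ y) y :=
  (hφ.eventually (by simp)).mono fun _ hy => (hy.differentiableAt (by simp)).hasFDerivAt

theorem ContDiffAt.hasFDerivAt_fderiv {φ : E → G} {x : E} (hφ : ContDiffAt ℝ 2 φ x) :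
    HasFDerivAt (fderiv ℝ φ) (fderiv ℝ (fderiv ℝ φ) x) x :=
  ((hφ.fderiv_right (m := 1) le_rfl).differentiableAt one_ne_zero).hasFDerivAt

theorem ContinuousLinearMap.hasFDerivAt_apply_sub_sub (B : E →L[ℝ] E →L[ℝ] G) (x z : E) :
    HasFDerivAt (fun y => B (y - x) (y - x)) (B (z - x) + B.flip (z - x)) z := by
  have hsub : HasFDerivAt (fun y : E => y - x) (ContinuousLinearMap.id ℝ E) z :=
    (hasFDerivAt_id z).sub_const x
  refine ((B.hasFDerivAt.comp z hsub).clm_apply hsub).congr_fderiv ?_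
  ext; simp

theorem isLittleO_sub_sq_of_isLittleO_fderiv {g : E → G} {g' : E → E →L[ℝ] G} {x : E}
    (hg : ∀ᶠ y in 𝓝 x, HasFDerivAt g (g' y) y) (hg' : g' =o[𝓝 x] fun y => y - x) :
    (fun y => g y - g x) =o[𝓝 x] fun y => ‖y - x‖ ^ 2 := by
  refine IsLittleO.of_bound fun ε hε => ?_
  obtain ⟨δ, hδ, hball⟩ := eventually_nhds_iff_ball.1 (hg.and (hg'.bound hε))
  filter_upwards [ball_mem_nhds x hδ] with y hy
  have hsub : closedBall x (dist y x) ⊆ ball x δ := closedBall_subset_ball (mem_ball.1 hy)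
  have hbound : ∀ z ∈ closedBall x (dist y x), ‖g' z‖ ≤ ε * ‖y - x‖ := fun z hz => by
    refine (hball z (hsub hz)).2.trans ?_
    rw [← dist_eq_norm, ← dist_eq_norm]
    exact mul_le_mul_of_nonneg_left (mem_closedBall.1 hz) hε.le
  have := (convex_closedBall x (dist y x)).norm_image_sub_le_of_norm_hasFDerivWithin_le
    (fun z hz => (hball z (hsub hz)).1.hasFDerivWithinAt) hbound
    (mem_closedBall_self dist_nonneg) (mem_closedBall.2 le_rfl)
  simpa [sq, mul_assoc] using this

theorem isLittleO_taylor_two {φ : E → ℝ} {φ' : E → E →L[ℝ] ℝ} {φ'' : E →L[ℝ] E →L[ℝ] ℝ}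
    {x : E} (hφ : ∀ᶠ y in 𝓝 x, HasFDerivAt φ (φ' y) y) (hφ' : HasFDerivAt φ' φ'' x) :
    (fun y => φ y - φ x - φ' x (y - x) - (1 / 2) * φ'' (y - x) (y - x)) =o[𝓝 x]
      fun y => ‖y - x‖ ^ 2 := by
  have hsymm := second_derivative_symmetric_of_eventually hφ hφ'
  have hg : ∀ᶠ y in 𝓝 x, HasFDerivAt (fun y => φ y - φ' x y - (1 / 2) * φ'' (y - x) (y - x))
      (φ' y - φ' x - φ'' (y - x)) y := by
    filter_upwards [hφ] with y hy
    refine ((hy.sub (φ' x).hasFDerivAt).sub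
      ((φ''.hasFDerivAt_apply_sub_sub x y).const_mul (1 / 2))).congr_fderiv ?_
    ext h
    simp only [one_div, map_sub, smul_add, _root_.sub_apply, _root_.add_apply, _root_.smul_apply,
      smul_eq_mul, ContinuousLinearMap.flip_apply, hsymm h, sub_right_inj]
    ring
  refine (isLittleO_sub_sq_of_isLittleO_fderiv hg hφ'.isLittleO).congr_left fun y => ?_
  simp only [map_sub, sub_self, map_zero]
  ring

theorem nonneg_of_eventually_nonneg_of_isLittleO_sq {h : ℝ → ℝ} {c : ℝ}
    (hh : ∀ᶠ t in 𝓝 0, 0 ≤ h t) (ho : (fun t => h t - c * t ^ 2) =o[𝓝 0] fun t => t ^ 2) :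
    0 ≤ c := by
  have hlim : Tendsto (fun t => h t / t ^ 2) (𝓝[≠] 0) (𝓝 c) := by
    have := ((ho.mono (nhdsWithin_le_nhds (s := {0}ᶜ))).tendsto_div_nhds_zero).add_const c
    rw [zero_add] at this
    refine this.congr' ?_
    filter_upwards [self_mem_nhdsWithin] with t ht
    rw [sub_div, mul_div_cancel_right₀ _ (pow_ne_zero 2 ht), sub_add_cancel]
  refine ge_of_tendsto hlim ?_
  filter_upwards [nhdsWithin_le_nhds hh] with t ht
  positivity

theorem ConvexOn.eventually_le_add_of_isLocalMax_sub {Ω : Set E} {u φ : E → ℝ} {x : E}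
    (hu : ConvexOn ℝ Ω u) (hΩ : Ω ∈ 𝓝 x) (hmax : IsLocalMax (fun y => u y - φ y) x) (v : E) :
    ∀ᶠ t in 𝓝 (0 : ℝ), 2 * φ x ≤ φ (x + t • v) + φ (x - t • v) := by
  have hplus : Tendsto (fun t : ℝ => x + t • v) (𝓝 0) (𝓝 x) :=
    (by fun_prop : Continuous fun t : ℝ => x + t • v).tendsto' 0 x (by simp)
  have hminus : Tendsto (fun t : ℝ => x - t • v) (𝓝 0) (𝓝 x) :=
    (by fun_prop : Continuous fun t : ℝ => x - t • v).tendsto' 0 x (by simp)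
  filter_upwards [hplus.eventually hΩ, hminus.eventually hΩ, hplus.eventually hmax,
    hminus.eventually hmax] with t hp hm hmaxp hmaxm
  have hmid := hu.2 hp hm (by norm_num : (0 : ℝ) ≤ 1 / 2) (by norm_num : (0 : ℝ) ≤ 1 / 2)
    (by norm_num)
  rw [← smul_add, add_add_sub_cancel, ← two_smul ℝ x, smul_smul] at hmid
  norm_num at hmid hmaxp hmaxm
  linarith

theorem second_fderiv_self_nonneg {φ : E → ℝ} {φ' : E → E →L[ℝ] ℝ}
    {φ'' : E →L[ℝ] E →L[ℝ] ℝ} {x v : E} (hφ : ∀ᶠ y in 𝓝 x, HasFDerivAt φ (φ' y) y)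
    (hφ' : HasFDerivAt φ' φ'' x)
    (hφv : ∀ᶠ t in 𝓝 (0 : ℝ), 2 * φ x ≤ φ (x + t • v) + φ (x - t • v)) :
    0 ≤ φ'' v v := by
  set r := fun y => φ y - φ x - φ' x (y - x) - (1 / 2) * φ'' (y - x) (y - x)
  have hr : ∀ s : ℝ, (fun t : ℝ => r (x + (s * t) • v)) =o[𝓝 0] fun t => t ^ 2 := by
    intro s
    have hline : Tendsto (fun t : ℝ => x + (s * t) • v) (𝓝 0) (𝓝 x) :=
      (by fun_prop : Continuous fun t : ℝ => x + (s * t) • v).tendsto' 0 x (by simp)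
    refine ((isLittleO_taylor_two hφ hφ').comp_tendsto hline).trans_isBigO ?_
    refine IsBigO.of_bound (s ^ 2 * ‖v‖ ^ 2) (Eventually.of_forall fun t => ?_)
    simp only [Function.comp_apply, add_sub_cancel_left, norm_smul, norm_mul, norm_pow,
      Real.norm_eq_abs, mul_pow, sq_abs]
    exact le_of_eq (by ring)
  refine nonneg_of_eventually_nonneg_of_isLittleO_sq
    (h := fun t => φ (x + t • v) + φ (x - t • v) - 2 * φ x)
    (hφv.mono fun t ht => by linarith) (((hr 1).add (hr (-1))).congr_left fun t => ?_)
  simp only [r, one_mul, neg_mul, neg_smul, ← sub_eq_add_neg, add_sub_cancel_left,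
    sub_sub_cancel_left, map_neg, map_smul, _root_.smul_apply, _root_.neg_apply, smul_eq_mul]
  ring

theorem eventually_le_taylor_two_add {φ : E → ℝ} {φ' : E → E →L[ℝ] ℝ}
    {φ'' : E →L[ℝ] E →L[ℝ] ℝ} {x : E} (hφ : ∀ᶠ y in 𝓝 x, HasFDerivAt φ (φ' y) y)
    (hφ' : HasFDerivAt φ' φ'' x) {ε : ℝ} (hε : 0 < ε) :
    ∀ᶠ y in 𝓝 x, φ y ≤ φ x + φ' x (y - x) + (1 / 2) * φ'' (y - x) (y - x) + ε * ‖y - x‖ ^ 2 := by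
  filter_upwards [(isLittleO_taylor_two hφ hφ').bound hε] with y hy
  rw [Real.norm_eq_abs, norm_pow, norm_norm] at hy
  linarith [le_abs_self (φ y - φ x - φ' x (y - x) - (1 / 2) * φ'' (y - x) (y - x))]

section Quadratic

variable (c : ℝ) (P : E →L[ℝ] ℝ) (B : E →L[ℝ] E →L[ℝ] ℝ) (x : E)

theorem contDiff_quadratic {n : WithTop ℕ∞} :
    ContDiff ℝ n fun y => c + P (y - x) + (1 / 2) * B (y - x) (y - x) := by
  fun_prop

theorem fderiv_fderiv_quadratic (hB : ∀ v w, B v w = B w v) (z : E) :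
    fderiv ℝ (fderiv ℝ fun y => c + P (y - x) + (1 / 2) * B (y - x) (y - x)) z = B := by
  have hsub : ∀ z, HasFDerivAt (fun y : E => y - x) (ContinuousLinearMap.id ℝ E) z :=
    fun z => (hasFDerivAt_id z).sub_const x
  have hderiv : fderiv ℝ (fun y => c + P (y - x) + (1 / 2) * B (y - x) (y - x)) =
      fun z => P + B (z - x) := by
    funext z
    refine ((((P.hasFDerivAt.comp z (hsub z)).const_add c).add
      ((B.hasFDerivAt_apply_sub_sub x z).const_mul (1 / 2))).congr_fderiv ?_).fderiv
    ext h
    simp only [ContinuousLinearMap.comp_id, one_div, map_sub, smul_add, _root_.add_apply,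
      _root_.smul_apply, _root_.sub_apply, smul_eq_mul, ContinuousLinearMap.flip_apply, hB h,
      add_right_inj]
    ring
  rw [hderiv]
  exact ((B.hasFDerivAt.comp z (hsub z)).const_add P).fderiv

theorem convexOn_quadratic {s : Set E} (hs : Convex ℝ s) (hB₀ : ∀ v, 0 ≤ B v v) :
    ConvexOn ℝ s fun y => c + P (y - x) + (1 / 2) * B (y - x) (y - x) := by
  refine ⟨hs, fun y _ z _ a b ha hb hab => ?_⟩
  have hcomb : a • y + b • z - x = a • (y - x) + b • (z - x) := by
    linear_combination (norm := module) hab • x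
  dsimp only
  rw [hcomb]
  set h := y - x
  set k := z - x
  have hdiff := hB₀ (h - k)
  obtain rfl : b = 1 - a := by linarith
  simp only [map_add, map_sub, map_smul, _root_.add_apply, _root_.sub_apply, _root_.smul_apply,
    smul_eq_mul] at hdiff ⊢
  nlinarith [mul_nonneg ha hb]

end Quadratic

end Calculus

theorem sq_norm_le_dotProduct_self {n : Type*} [Fintype n] (v : n → ℝ) : ‖v‖ ^ 2 ≤ v ⬝ᵥ v := by
  have hv : 0 ≤ v ⬝ᵥ v := by simpa using dotProduct_star_self_nonneg v
  have hnorm : ‖v‖ ≤ √(v ⬝ᵥ v) := (pi_norm_le_iff_of_nonneg (Real.sqrt_nonneg _)).2 fun i =>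
    Real.abs_le_sqrt <| by
      simpa [dotProduct, sq] using Finset.single_le_sum (f := fun j => v j * v j)
        (fun j _ => mul_self_nonneg (v j)) (Finset.mem_univ i)
  calc ‖v‖ ^ 2 ≤ √(v ⬝ᵥ v) ^ 2 := by gcongr
    _ = v ⬝ᵥ v := Real.sq_sqrt hv

noncomputable def Matrix.toBilinCLM {n : Type*} [Fintype n] [DecidableEq n]
    (M : Matrix n n ℝ) : (n → ℝ) →L[ℝ] (n → ℝ) →L[ℝ] ℝ :=
  LinearMap.toContinuousLinearMap
    (LinearMap.toContinuousLinearMap.toLinearMap ∘ₗ Matrix.toLinearMap₂' ℝ M)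

theorem Matrix.toLinearMap₁₂_toBilinCLM {n : Type*} [Fintype n] [DecidableEq n]
    (M : Matrix n n ℝ) : M.toBilinCLM.toLinearMap₁₂ = Matrix.toLinearMap₂' ℝ M :=
  rfl

@[simp] theorem Matrix.toBilinCLM_apply {n : Type*} [Fintype n] [DecidableEq n]
    (M : Matrix n n ℝ) (v w : n → ℝ) : M.toBilinCLM v w = v ⬝ᵥ M *ᵥ w :=
  Matrix.toLinearMap₂'_apply' M v w

namespace Matrix.PosSemidef

variable {n : Type*} [Fintype n] [DecidableEq n] {A B : Matrix n n ℝ}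

theorem card_mul_det_rpow_le_trace [Nonempty n] (hA : A.PosSemidef) :
    (Fintype.card n : ℝ) * A.det ^ (1 / (Fintype.card n : ℝ)) ≤ A.trace := by
  set μ := hA.1.eigenvalues
  have hμ : ∀ i, 0 ≤ μ i := hA.eigenvalues_nonneg
  have hn : (0 : ℝ) < Fintype.card n := by exact_mod_cast Fintype.card_pos
  have amgm := Real.geom_mean_le_arith_mean_weighted Finset.univ
    (fun _ => 1 / (Fintype.card n : ℝ)) μ (fun _ _ => by positivity)
    (by simp [Finset.card_univ]) (fun i _ => hμ i)
  rw [Real.finsetProd_rpow _ _ fun i _ => hμ i, ← Finset.mul_sum] at amgm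
  rw [hA.1.det_eq_prod_eigenvalues, hA.1.trace_eq_sum_eigenvalues]
  simp only [RCLike.ofReal_real_eq_id, id]
  calc _ ≤ (Fintype.card n : ℝ) * (1 / Fintype.card n * ∑ i, μ i) := by gcongr
    _ = ∑ i, μ i := by field_simp

open scoped MatrixOrder in
theorem card_mul_det_mul_rpow_le_trace_mul [Nonempty n] (hA : A.PosSemidef)
    (hB : B.PosSemidef) :
    (Fintype.card n : ℝ) * (A.det * B.det) ^ (1 / (Fintype.card n : ℝ)) ≤ (B * A).trace := by
  obtain ⟨C, rfl⟩ := CStarAlgebra.nonneg_iff_eq_star_mul_self.mp hB.nonneg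
  have hdet : A.det * (star C * C).det = (C * A * Cᴴ).det := by
    simp only [det_mul, star_eq_conjTranspose, det_conjTranspose, star_trivial]
    ring
  have htr : (star C * C * A).trace = (C * A * Cᴴ).trace := by
    rw [Matrix.mul_assoc, trace_mul_comm, star_eq_conjTranspose]
  rw [hdet, htr]
  exact (hA.mul_mul_conjTranspose_same C).card_mul_det_rpow_le_trace

end Matrix.PosSemidef

theorem le_det_of_forall_pos_le_det_add_smul_one {n : Type*} [Fintype n] [DecidableEq n]
    {A : Matrix n n ℝ} {a : ℝ} (h : ∀ t : ℝ, 0 < t → a ≤ (A + t • 1).det) : a ≤ A.det := by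
  have hcont : Continuous fun t : ℝ => (A + t • (1 : Matrix n n ℝ)).det := by fun_prop
  have := (hcont.tendsto' 0 A.det (by simp)).mono_left (nhdsWithin_le_nhds (s := Set.Ioi 0))
  exact ge_of_tendsto this (eventually_nhdsWithin_of_forall h)

section Hessian

variable {d : ℕ}

theorem hessianM_eq_toMatrix₂' (φ : (Fin d → ℝ) → ℝ) (x : Fin d → ℝ) :
    hessianM d φ x = LinearMap.toMatrix₂' ℝ (fderiv ℝ (fderiv ℝ φ) x).toLinearMap₁₂ := by
  ext i j
  simp [hessianM, iteratedFDeriv_two_apply, LinearMap.toMatrix₂'_apply]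

theorem dotProduct_hessianM_mulVec (φ : (Fin d → ℝ) → ℝ) (x v w : Fin d → ℝ) :
    v ⬝ᵥ hessianM d φ x *ᵥ w = fderiv ℝ (fderiv ℝ φ) x v w := by
  rw [hessianM_eq_toMatrix₂', ← Matrix.toLinearMap₂'_apply', Matrix.toLinearMap₂'_toMatrix']
  rfl

theorem posSemidef_hessianM_of_isLocalMax_sub {Ω : Set (Fin d → ℝ)} {u φ : (Fin d → ℝ) → ℝ}
    {x : Fin d → ℝ} (hu : ConvexOn ℝ Ω u) (hΩ : Ω ∈ 𝓝 x) (hφ : ContDiffAt ℝ 2 φ x)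
    (hmax : IsLocalMax (fun y => u y - φ y) x) : (hessianM d φ x).PosSemidef := by
  refine .of_dotProduct_mulVec_nonneg ?_ fun v => ?_
  · ext i j
    simp [hessianM_eq_toMatrix₂', LinearMap.toMatrix₂'_apply,
      hφ.isSymmSndFDerivAt (by simp) (Pi.single i 1)]
  · rw [star_trivial, dotProduct_hessianM_mulVec]
    exact second_fderiv_self_nonneg hφ.eventually_hasFDerivAt hφ.hasFDerivAt_fderiv
      (hu.eventually_le_add_of_isLocalMax_sub hΩ hmax v)

noncomputable def taylorQuadratic (φ : (Fin d → ℝ) → ℝ) (x : Fin d → ℝ) (t : ℝ) :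
    (Fin d → ℝ) → ℝ :=
  fun y => φ x + fderiv ℝ φ x (y - x) + (1 / 2) *
    (fderiv ℝ (fderiv ℝ φ) x + t • (1 : Matrix (Fin d) (Fin d) ℝ).toBilinCLM) (y - x) (y - x)

variable {φ : (Fin d → ℝ) → ℝ} {x : Fin d → ℝ} {t : ℝ}

theorem taylorQuadratic_self : taylorQuadratic φ x t x = φ x := by
  simp [taylorQuadratic]

theorem contDiff_taylorQuadratic : ContDiff ℝ 2 (taylorQuadratic φ x t) :=
  contDiff_quadratic _ _ _ _

theorem convexOn_taylorQuadratic {Ω : Set (Fin d → ℝ)} (hΩ : Convex ℝ Ω)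
    (hA : (hessianM d φ x).PosSemidef) (ht : 0 ≤ t) : ConvexOn ℝ Ω (taylorQuadratic φ x t) := by
  refine convexOn_quadratic _ _ _ _ hΩ fun v => ?_
  have hAv := hA.dotProduct_mulVec_nonneg v
  rw [star_trivial, dotProduct_hessianM_mulVec] at hAv
  have hv : 0 ≤ v ⬝ᵥ v := by simpa using dotProduct_star_self_nonneg v
  simp only [_root_.add_apply, _root_.smul_apply, Matrix.toBilinCLM_apply, one_mulVec, smul_eq_mul]
  positivity

theorem hessianM_taylorQuadratic (hφ : ContDiffAt ℝ 2 φ x) (z : Fin d → ℝ) :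
    hessianM d (taylorQuadratic φ x t) z = hessianM d φ x + t • 1 := by
  have hsymm := hφ.isSymmSndFDerivAt (by simp)
  unfold taylorQuadratic
  rw [hessianM_eq_toMatrix₂', fderiv_fderiv_quadratic _ _ _ _ fun v w => ?_,
    hessianM_eq_toMatrix₂']
  · simp [Matrix.toLinearMap₁₂_toBilinCLM]
  · simp [hsymm v w, dotProduct_comm]

theorem eventually_le_taylorQuadratic (hφ : ContDiffAt ℝ 2 φ x) (ht : 0 < t) :
    ∀ᶠ y in 𝓝 x, φ y ≤ taylorQuadratic φ x t y := by
  filter_upwards [eventually_le_taylor_two_add hφ.eventually_hasFDerivAt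
    hφ.hasFDerivAt_fderiv (half_pos ht)] with y hy
  have := sq_norm_le_dotProduct_self (y - x)
  simp only [taylorQuadratic, _root_.add_apply, _root_.smul_apply, Matrix.toBilinCLM_apply,
    one_mulVec, smul_eq_mul]
  nlinarith [mul_le_mul_of_nonneg_left this ht.le]

theorem div_pow_le_det_hessianM {Ω : Set (Fin d → ℝ)} {u : (Fin d → ℝ) → ℝ} {c : ℝ}
    (hΩ : Convex ℝ Ω) (hφ : ContDiffAt ℝ 2 φ x) (hA : (hessianM d φ x).PosSemidef)
    (hmax : IsLocalMax (fun y => u y - φ y) x)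
    (hMA : ∀ ψ, ContDiffOn ℝ 2 ψ Ω → ConvexOn ℝ Ω ψ → IsLocalMaxOn (fun y => u y - ψ y) Ω x →
      MAop d (hessianM d ψ x) c ≤ 0) :
    (c / d) ^ d ≤ (hessianM d φ x).det := by
  refine le_det_of_forall_pos_le_det_add_smul_one fun t ht => ?_
  have hmaxψ : IsLocalMaxOn (fun y => u y - taylorQuadratic φ x t y) Ω x := by
    refine Eventually.filter_mono nhdsWithin_le_nhds ?_
    filter_upwards [eventually_le_taylorQuadratic hφ ht, hmax] with y hψy hmaxy
    rw [taylorQuadratic_self]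
    linarith
  have := hMA _ contDiff_taylorQuadratic.contDiffOn (convexOn_taylorQuadratic hΩ hA ht.le) hmaxψ
  rwa [hessianM_taylorQuadratic hφ, MAop, sub_nonpos] at this

end Hessian

theorem bellman_nonpos_of_posSemidef {d : ℕ} (hd : 0 < d) {A : Matrix (Fin d) (Fin d) ℝ}
    (hA : A.PosSemidef) {f : ℝ} (hf : 0 ≤ f) (hdet : (f / d) ^ d ≤ A.det) :
    bellman d A f ≤ 0 := by
  have : NeZero d := ⟨hd.ne'⟩
  have hd' : (0 : ℝ) < d := by exact_mod_cast hd
  have hfA : f ≤ d * A.det ^ (1 / (d : ℝ)) := by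
    have := Real.rpow_le_rpow (by positivity) hdet (by positivity : (0 : ℝ) ≤ 1 / d)
    rw [one_div, Real.pow_rpow_inv_natCast (by positivity) hd.ne', ← one_div] at this
    rwa [div_le_iff₀ hd', mul_comm] at this
  refine Real.sSup_le ?_ le_rfl
  rintro _ ⟨B, ⟨hB, -⟩, rfl⟩
  have amgm := hA.card_mul_det_mul_rpow_le_trace_mul hB
  rw [Fintype.card_fin, Real.mul_rpow hA.det_nonneg hB.det_nonneg] at amgm
  have hBd : 0 ≤ B.det ^ (1 / (d : ℝ)) := Real.rpow_nonneg hB.det_nonneg _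
  unfold bval
  nlinarith [mul_le_mul_of_nonneg_right hfA hBd]

theorem stmt_2_general (d : ℕ) (hd : 2 ≤ d) (Ω : Set (Fin d → ℝ)) (hΩo : IsOpen Ω)
    (f : (Fin d → ℝ) → ℝ) (hf0 : ∀ x ∈ Ω, 0 ≤ f x)
    (u : (Fin d → ℝ) → ℝ) (hucvx : ConvexOn ℝ Ω u)
    (hMAsub : ∀ φ : (Fin d → ℝ) → ℝ, ContDiffOn ℝ 2 φ Ω → ConvexOn ℝ Ω φ →
      ∀ x ∈ Ω, IsLocalMaxOn (fun y => u y - φ y) Ω x →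
        MAop d (hessianM d φ x) (f x) ≤ 0) :
    ∀ φ : (Fin d → ℝ) → ℝ, ContDiffOn ℝ 2 φ Ω →
      ∀ x ∈ Ω, IsLocalMaxOn (fun y => u y - φ y) Ω x →
        bellman d (hessianM d φ x) (f x) ≤ 0 := by
  intro φ hφ x hx hmax
  have hΩx : Ω ∈ 𝓝 x := hΩo.mem_nhds hx
  have hφx : ContDiffAt ℝ 2 φ x := hφ.contDiffAt hΩx
  have hmax' : IsLocalMax (fun y => u y - φ y) x := hmax.isLocalMax hΩx
  have hA := posSemidef_hessianM_of_isLocalMax_sub hucvx hΩx hφx hmax'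
  exact bellman_nonpos_of_posSemidef (by omega) hA (hf0 x hx)
    (div_pow_le_det_hessianM hucvx.1 hφx hA hmax' fun ψ hψ hψc => hMAsub ψ hψ hψc x hx)

/-- A convex viscosity subsolution of the Monge–Ampère equation on the set of convex
functions is a viscosity subsolution of the Bellman equation. -/
theorem stmt_2 (d : ℕ) (hd : 2 ≤ d) (Ω : Set (Fin d → ℝ)) (hΩo : IsOpen Ω)
    (hΩb : Bornology.IsBounded Ω)
    (f : (Fin d → ℝ) → ℝ) (hfc : ContinuousOn f Ω) (hf0 : ∀ x ∈ Ω, 0 ≤ f x)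
    (u : (Fin d → ℝ) → ℝ) (husc : UpperSemicontinuousOn u Ω) (hucvx : ConvexOn ℝ Ω u)
    (hMAsub : ∀ φ : (Fin d → ℝ) → ℝ, ContDiffOn ℝ 2 φ Ω → ConvexOn ℝ Ω φ →
      ∀ x ∈ Ω, IsLocalMaxOn (fun y => u y - φ y) Ω x →
        MAop d (hessianM d φ x) (f x) ≤ 0) :
    ∀ φ : (Fin d → ℝ) → ℝ, ContDiffOn ℝ 2 φ Ω →
      ∀ x ∈ Ω, IsLocalMaxOn (fun y => u y - φ y) Ω x →
        bellman d (hessianM d φ x) (f x) ≤ 0 :=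
  stmt_2_general d hd Ω hΩo f hf0 u hucvx hMAsub
end

section
/- Let A ∈ 𝐒₊ with smallest eigenvalue λ, and let g > 0 be a real number. Then H(A, g) > −λ, and every maximizer B' ∈ 𝐒₁ of the supremum defining H(A,g) (i.e. every B' ∈ 𝐒₁ with −B':A + g·(det B')^{1/d} = H(A,g)) is invertible, i.e. det B' > 0. -/
/-!
For `B ∈ 𝐒₁` one has `B : A ≥ λ`, so a singular `B` scores at most `-λ`, and it suffices to beat
`-λ`. Take `B` diagonal in an eigenbasis of `A`, with weight `1 - (d - 1) t` on a `λ`-eigenvector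
and `t` on the others: then `B : A` exceeds `λ` only by `O(t)`, while `(det B)^{1/d}` is of order
`t^{(d-1)/d}`, which wins for small `t`.
-/

open Matrix Set

section PeakWeights

variable {ι : Type*} [Fintype ι] [DecidableEq ι]

def peakWeights (i₀ : ι) (t : ℝ) : ι → ℝ :=
  fun i => if i = i₀ then 1 - (Fintype.card ι - 1) * t else t

lemma peakWeights_self (i₀ : ι) (t : ℝ) :
    peakWeights i₀ t i₀ = 1 - (Fintype.card ι - 1) * t :=
  if_pos rfl

lemma peakWeights_of_mem_compl {i₀ i : ι} (t : ℝ) (hi : i ∈ ({i₀}ᶜ : Finset ι)) :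
    peakWeights i₀ t i = t :=
  if_neg (by simpa using hi)

lemma sum_peakWeights (i₀ : ι) (t : ℝ) : ∑ i, peakWeights i₀ t i = 1 := by
  rw [Fintype.sum_eq_add_sum_compl i₀,
    Finset.sum_congr rfl fun i hi => peakWeights_of_mem_compl t hi, Finset.sum_const,
    nsmul_eq_mul, Finset.card_compl, Finset.card_singleton,
    Nat.cast_sub (Fintype.card_pos_iff.mpr ⟨i₀⟩), Nat.cast_one, peakWeights_self]
  ring

lemma sum_peakWeights_mul (i₀ : ι) (t : ℝ) (μ : ι → ℝ) :
    ∑ i, peakWeights i₀ t i * μ i = μ i₀ + t * (∑ i, μ i - Fintype.card ι * μ i₀) := by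
  rw [Fintype.sum_eq_add_sum_compl i₀, Fintype.sum_eq_add_sum_compl i₀ μ,
    Finset.sum_congr rfl fun i hi => by rw [peakWeights_of_mem_compl t hi], ← Finset.mul_sum,
    peakWeights_self]
  ring

lemma prod_peakWeights (i₀ : ι) (t : ℝ) :
    ∏ i, peakWeights i₀ t i = (1 - (Fintype.card ι - 1) * t) * t ^ (Fintype.card ι - 1) := by
  rw [Fintype.prod_eq_mul_prod_compl i₀,
    Finset.prod_congr rfl fun i hi => peakWeights_of_mem_compl t hi, Finset.prod_const,
    Finset.card_compl, Finset.card_singleton, peakWeights_self]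

end PeakWeights

lemma exists_weights_lt {ι : Type*} [Fintype ι] (μ : ι → ℝ) (i₀ : ι) {g : ℝ} (hg : 0 < g) :
    ∃ b : ι → ℝ, (∀ i, 0 ≤ b i) ∧ ∑ i, b i = 1 ∧
      ∑ i, b i * μ i < μ i₀ + g * (∏ i, b i) ^ ((1 : ℝ) / Fintype.card ι) := by
  classical
  set n := Fintype.card ι
  have hn : 0 < n := Fintype.card_pos_iff.mpr ⟨i₀⟩
  set K := |∑ i, μ i - n * μ i₀|
  -- chosen so that `(t * K / g) ^ n < (1 - (n - 1) * t) * t ^ (n - 1) = ∏ i, peakWeights i₀ t i`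
  set t := 1 / ((K / g) ^ n + n)
  have ht : 0 < t := by positivity
  have hbudget : (K / g) ^ n * t < 1 - (n - 1) * t := by
    have : ((K / g) ^ n + n) * t = 1 := mul_one_div_cancel (by positivity)
    nlinarith
  have hb : ∀ i, 0 ≤ peakWeights i₀ t i := by
    intro i
    by_cases hi : i = i₀
    · rw [hi, peakWeights_self]
      nlinarith [pow_nonneg (div_nonneg (abs_nonneg _) hg.le : 0 ≤ K / g) n]
    · rw [peakWeights_of_mem_compl t (by simpa using hi)]
      exact ht.le
  refine ⟨peakWeights i₀ t, hb, sum_peakWeights i₀ t, ?_⟩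
  have hroot : t * K / g < (∏ i, peakWeights i₀ t i) ^ ((1 : ℝ) / n) := by
    rw [one_div, Real.lt_rpow_inv_iff_of_pos (by positivity)
      (Finset.prod_nonneg fun i _ => hb i) (by positivity), Real.rpow_natCast, prod_peakWeights]
    calc (t * K / g) ^ n = (K / g) ^ n * t * t ^ (n - 1) := by
          rw [mul_div_assoc, mul_pow, mul_assoc, ← pow_succ', Nat.sub_add_cancel hn, mul_comm]
      _ < (1 - (n - 1) * t) * t ^ (n - 1) := by gcongr
  rw [sum_peakWeights_mul]
  calc μ i₀ + t * (∑ i, μ i - n * μ i₀) ≤ μ i₀ + g * (t * K / g) := by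
        rw [mul_div_cancel₀ _ hg.ne']
        gcongr
        exact le_abs_self _
    _ < μ i₀ + g * (∏ i, peakWeights i₀ t i) ^ ((1 : ℝ) / n) := by gcongr

namespace Matrix

variable {n : Type*} [Fintype n] [DecidableEq n]

lemma PosSemidef.det_le_trace_pow {B : Matrix n n ℝ} (hB : B.PosSemidef) :
    B.det ≤ B.trace ^ Fintype.card n := by
  rw [hB.isHermitian.det_eq_prod_eigenvalues, hB.isHermitian.trace_eq_sum_eigenvalues]
  simp only [RCLike.ofReal_real_eq_id, id]
  rw [← Finset.card_univ, ← Finset.prod_const]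
  exact Finset.prod_le_prod (fun i _ => hB.eigenvalues_nonneg i) fun i _ =>
    Finset.single_le_sum (fun j _ => hB.eigenvalues_nonneg j) (Finset.mem_univ i)

namespace IsHermitian

variable {A : Matrix n n ℝ} (hA : A.IsHermitian)

noncomputable def withEigenvalues (b : n → ℝ) : Matrix n n ℝ :=
  hA.eigenvectorUnitary * diagonal b * star (hA.eigenvectorUnitary : Matrix n n ℝ)

lemma withEigenvalues_eigenvalues : hA.withEigenvalues hA.eigenvalues = A := by
  conv_rhs => rw [hA.spectral_theorem]
  simp [withEigenvalues, RCLike.ofReal_real_eq_id]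

lemma posSemidef_withEigenvalues {b : n → ℝ} (hb : ∀ i, 0 ≤ b i) :
    (hA.withEigenvalues b).PosSemidef := by
  rw [withEigenvalues, star_eq_conjTranspose]
  exact (posSemidef_diagonal_iff.mpr hb).mul_mul_conjTranspose_same _

lemma trace_withEigenvalues (b : n → ℝ) : (hA.withEigenvalues b).trace = ∑ i, b i := by
  rw [withEigenvalues, trace_mul_cycle, Unitary.coe_star_mul_self, one_mul, trace_diagonal]

lemma det_withEigenvalues (b : n → ℝ) : (hA.withEigenvalues b).det = ∏ i, b i := by
  rw [withEigenvalues, det_mul_comm, ← mul_assoc, Unitary.coe_star_mul_self, one_mul,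
    det_diagonal]

lemma withEigenvalues_mul (b c : n → ℝ) :
    hA.withEigenvalues b * hA.withEigenvalues c = hA.withEigenvalues (b * c) := by
  simp only [withEigenvalues, mul_assoc]
  rw [← mul_assoc (star _), Unitary.coe_star_mul_self, one_mul, ← mul_assoc (diagonal b),
    diagonal_mul_diagonal]
  rfl

lemma trace_withEigenvalues_mul (b : n → ℝ) :
    (hA.withEigenvalues b * A).trace = ∑ i, b i * hA.eigenvalues i := by
  have h := hA.withEigenvalues_mul b hA.eigenvalues
  rw [hA.withEigenvalues_eigenvalues] at h
  rw [h, trace_withEigenvalues]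
  rfl

lemma trace_mul_eq_sum (B : Matrix n n ℝ) :
    (B * A).trace = ∑ i, (star (hA.eigenvectorUnitary : Matrix n n ℝ) * B *
      hA.eigenvectorUnitary) i i * hA.eigenvalues i := by
  conv_lhs => rw [← hA.withEigenvalues_eigenvalues, withEigenvalues, ← mul_assoc, ← mul_assoc,
    trace_mul_comm, ← mul_assoc]
  simp only [trace, diag, mul_diagonal, mul_assoc]

lemma mul_trace_le_trace_mul {lam : ℝ} (hlam : ∀ i, lam ≤ hA.eigenvalues i) {B : Matrix n n ℝ}
    (hB : B.PosSemidef) : lam * B.trace ≤ (B * A).trace := by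
  set U : Matrix n n ℝ := ↑hA.eigenvectorUnitary
  have hC : (star U * B * U).PosSemidef := by
    rw [star_eq_conjTranspose]
    exact hB.conjTranspose_mul_mul_same U
  have htrace : (star U * B * U).trace = B.trace := by
    rw [trace_mul_cycle, show U * star U = 1 from Unitary.coe_mul_star_self _, one_mul]
  rw [hA.trace_mul_eq_sum, ← htrace, trace, Finset.mul_sum]
  exact Finset.sum_le_sum fun i _ =>
    (mul_comm _ _).trans_le (mul_le_mul_of_nonneg_left (hlam i) hC.diag_nonneg)

end IsHermitian

end Matrix

lemma bval_le_of_mem_S1set {d : ℕ} {A : Matrix (Fin d) (Fin d) ℝ} (hA : A.IsHermitian) {lam : ℝ}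
    (hlam : ∀ i, lam ≤ hA.eigenvalues i) {B : Matrix (Fin d) (Fin d) ℝ} (hB : B ∈ S1set d)
    (g : ℝ) : bval d A B g ≤ -lam + g * B.det ^ ((1 : ℝ) / d) := by
  have h := hA.mul_trace_le_trace_mul hlam hB.1
  rw [hB.2, mul_one] at h
  unfold bval
  linarith

lemma exists_lt_bval {d : ℕ} {A : Matrix (Fin d) (Fin d) ℝ} (hA : A.IsHermitian) (i₀ : Fin d)
    {g : ℝ} (hg : 0 < g) : ∃ B ∈ S1set d, -hA.eigenvalues i₀ < bval d A B g := by
  obtain ⟨b, hb, hsum, hlt⟩ := exists_weights_lt hA.eigenvalues i₀ hg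
  refine ⟨hA.withEigenvalues b, ⟨hA.posSemidef_withEigenvalues hb, ?_⟩, ?_⟩
  · rw [hA.trace_withEigenvalues, hsum]
  · rw [Fintype.card_fin] at hlt
    rw [bval, hA.trace_withEigenvalues_mul, hA.det_withEigenvalues]
    linarith

theorem stmt_6_general (d : ℕ) (A : Matrix (Fin d) (Fin d) ℝ) (hA : A.PosSemidef)
    (lam : ℝ)
    (hlam_mem : ∃ i, hA.isHermitian.eigenvalues i = lam)
    (hlam_le : ∀ i, lam ≤ hA.isHermitian.eigenvalues i)
    (g : ℝ) (hg : 0 < g) :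
    -lam < bellman d A g ∧
    ∀ B' ∈ S1set d, bval d A B' g = bellman d A g → 0 < B'.det := by
  obtain ⟨i₀, rfl⟩ := hlam_mem
  have hbdd : BddAbove ((fun B => bval d A B g) '' S1set d) := by
    refine ⟨-hA.isHermitian.eigenvalues i₀ + g, ?_⟩
    rintro _ ⟨B, hB, rfl⟩
    have hdet : B.det ^ ((1 : ℝ) / d) ≤ 1 := Real.rpow_le_one hB.1.det_nonneg
      (by simpa [hB.2] using hB.1.det_le_trace_pow) (by positivity)
    nlinarith [bval_le_of_mem_S1set hA.isHermitian hlam_le hB g]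
  obtain ⟨B₀, hB₀, hlt⟩ := exists_lt_bval hA.isHermitian i₀ hg
  have hH : -hA.isHermitian.eigenvalues i₀ < bellman d A g :=
    hlt.trans_le (le_csSup hbdd ⟨B₀, hB₀, rfl⟩)
  refine ⟨hH, fun B hB hmax => hB.1.det_nonneg.lt_of_ne' fun hdet => ?_⟩
  have h := bval_le_of_mem_S1set hA.isHermitian hlam_le hB g
  rw [hdet, Real.zero_rpow (by simp [i₀.pos.ne']), mul_zero, add_zero, hmax] at h
  exact h.not_gt hH

/-- For PSD A with smallest eigenvalue λ and g > 0 one has H(A,g) > −λ and every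
maximizer of the supremum defining H(A,g) is invertible, i.e. has positive determinant. -/
theorem stmt_6 (d : ℕ) (hd : 2 ≤ d) (A : Matrix (Fin d) (Fin d) ℝ) (hA : A.PosSemidef)
    (lam : ℝ)
    (hlam_mem : ∃ i, hA.isHermitian.eigenvalues i = lam)
    (hlam_le : ∀ i, lam ≤ hA.isHermitian.eigenvalues i)
    (g : ℝ) (hg : 0 < g) :
    -lam < bellman d A g ∧
    ∀ B' ∈ S1set d, bval d A B' g = bellman d A g → 0 < B'.det :=
  stmt_6_general d A hA lam hlam_mem hlam_le g hg
end

section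
/- Let Ω ⊆ ℝ^d be a bounded open set and f : Ω → [0,∞) continuous. Suppose u : Ω → ℝ is upper semicontinuous, convex on Ω, and is a viscosity subsolution of the Bellman equation, i.e. for every φ ∈ C²(Ω) such that u − φ attains a local maximum at x ∈ Ω one has H(D²φ(x), f(x)) ≤ 0. Then u is a viscosity subsolution of the Monge–Ampère equation on the set of convex functions: for every convex φ ∈ C²(Ω) such that u − φ attains a local maximum at x ∈ Ω, one has M(D²φ(x), f(x)) ≤ 0. -/
open Matrix Set

/-!
The values −B:A + f (det B)^{1/d}, B ∈ 𝐒₁, are bounded, so H(A, f) ≤ 0 makes each of them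
nonpositive; both terms being 1-homogeneous in B, this gives f (det B)^{1/d} ≤ B:A for every
positive semidefinite B. Rank-one B = v vᵀ show that A = D²φ(x) is positive semidefinite. For ε > 0 the
choice B = (A + εI)⁻¹ then gives f det(A + εI)^{-1/d} ≤ d − ε tr (A + εI)⁻¹ ≤ d, i.e.
(f/d)^d ≤ det(A + εI), and letting ε → 0 yields M(A, f) ≤ 0.
-/

namespace Matrix

variable {n : Type*} [Fintype n] {B : Matrix n n ℝ}

theorem PosSemidef.two_mul_abs_apply_le (hB : B.PosSemidef) (i j : n) :
    2 * |B i j| ≤ B i i + B j j := by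
  classical
  have quad (s : ℝ) : 0 ≤ B i i + 2 * s * B i j + s ^ 2 * B j j := by
    have := hB.dotProduct_mulVec_nonneg (Pi.single i 1 + s • Pi.single j 1)
    have hsymm : B j i = B i j := (hB.1.apply j i).symm
    simp only [star_trivial, mulVec_add, mulVec_single, MulOpposite.op_one, one_smul, mulVec_smul,
      dotProduct_add, add_dotProduct, single_dotProduct, col_apply, one_mul, smul_dotProduct, hsymm,
      smul_eq_mul, dotProduct_smul] at this
    linarith
  rcases abs_cases (B i j) with ⟨h, _⟩ | ⟨h, _⟩ <;> rw [h] <;> linarith [quad 1, quad (-1)]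

theorem PosSemidef.det_le_one_of_trace_eq_one [DecidableEq n] (hB : B.PosSemidef)
    (htr : B.trace = 1) : B.det ≤ 1 := by
  have hsum : ∑ i, hB.1.eigenvalues i = 1 := by
    simpa [htr] using hB.1.trace_eq_sum_eigenvalues.symm
  rw [hB.1.det_eq_prod_eigenvalues]
  simp only [Real.ringHom_apply]
  refine Finset.prod_le_one (fun i _ => hB.eigenvalues_nonneg i) fun i _ => ?_
  rw [← hsum]
  exact Finset.single_le_sum (fun j _ => hB.eigenvalues_nonneg j) (Finset.mem_univ i)

theorem le_det_of_forall_le_det_add_smul_one [DecidableEq n] {A : Matrix n n ℝ} {c : ℝ}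
    (h : ∀ ε : ℝ, 0 < ε → c ≤ (A + ε • 1).det) : c ≤ A.det := by
  have hcont : Continuous fun ε : ℝ => (A + ε • (1 : Matrix n n ℝ)).det := by fun_prop
  have := (hcont.tendsto 0).mono_left (nhdsWithin_le_nhds (s := Ioi 0))
  simp only [zero_smul, add_zero] at this
  exact ge_of_tendsto this (eventually_nhdsWithin_of_forall h)

end Matrix

lemma bval_le_sum_abs_add_abs {d : ℕ} (A : Matrix (Fin d) (Fin d) ℝ) (F : ℝ)
    {B : Matrix (Fin d) (Fin d) ℝ} (hB : B ∈ S1set d) :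
    bval d A B F ≤ ∑ i, ∑ j, |A i j| + |F| := by
  obtain ⟨hBpsd, htr⟩ := hB
  have hdiag_le (k : Fin d) : B k k ≤ 1 :=
    htr ▸ Finset.single_le_sum (f := fun k => B k k) (fun k _ => hBpsd.diag_nonneg)
      (Finset.mem_univ k)
  have hentry (i j : Fin d) : |B i j| ≤ 1 := by
    linarith [hBpsd.two_mul_abs_apply_le i j, hdiag_le i, hdiag_le j]
  have htrace : -(B * A).trace ≤ ∑ i, ∑ j, |A i j| := calc
    -(B * A).trace ≤ ∑ i, ∑ j, |B i j| * |A j i| := by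
      simp only [trace, diag, mul_apply, ← abs_mul]
      exact (neg_le_abs _).trans <| (Finset.abs_sum_le_sum_abs _ _).trans <|
        Finset.sum_le_sum fun i _ => Finset.abs_sum_le_sum_abs _ _
    _ ≤ ∑ i, ∑ j, |A j i| := by
      gcongr with i _ j _
      exact mul_le_of_le_one_left (abs_nonneg _) (hentry i j)
    _ = ∑ i, ∑ j, |A i j| := Finset.sum_comm
  have hroot : B.det ^ ((1 : ℝ) / d) ≤ 1 :=
    Real.rpow_le_one hBpsd.det_nonneg (hBpsd.det_le_one_of_trace_eq_one htr) (by positivity)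
  have hdet : F * B.det ^ ((1 : ℝ) / d) ≤ |F| := calc
    F * B.det ^ ((1 : ℝ) / d) ≤ |F| * B.det ^ ((1 : ℝ) / d) :=
      mul_le_mul_of_nonneg_right (le_abs_self F) (Real.rpow_nonneg hBpsd.det_nonneg _)
    _ ≤ |F| := mul_le_of_le_one_right (abs_nonneg F) hroot
  rw [bval]
  linarith

lemma bval_nonpos_of_bellman_nonpos {d : ℕ} {A : Matrix (Fin d) (Fin d) ℝ} {F : ℝ}
    (h : bellman d A F ≤ 0) {B : Matrix (Fin d) (Fin d) ℝ} (hB : B ∈ S1set d) :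
    bval d A B F ≤ 0 :=
  (le_csSup ⟨_, forall_mem_image.2 fun _ => bval_le_sum_abs_add_abs A F⟩
    (mem_image_of_mem _ hB)).trans h

lemma mul_det_rpow_le_trace_mul_of_bellman_nonpos {d : ℕ} [NeZero d]
    {A : Matrix (Fin d) (Fin d) ℝ} {F : ℝ} (h : bellman d A F ≤ 0)
    {B : Matrix (Fin d) (Fin d) ℝ} (hB : B.PosSemidef) :
    F * B.det ^ ((1 : ℝ) / d) ≤ (B * A).trace := by
  obtain rfl | hB0 := eq_or_ne B 0
  · simp [NeZero.ne d]
  set t := B.trace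
  have ht : 0 < t := hB.trace_nonneg.lt_of_ne' (hB.trace_eq_zero_iff.not.2 hB0)
  have hmem : t⁻¹ • B ∈ S1set d :=
    ⟨hB.smul (inv_nonneg.2 ht.le), by rw [trace_smul, smul_eq_mul, inv_mul_cancel₀ ht.ne']⟩
  have hroot : (t⁻¹ • B).det ^ ((1 : ℝ) / d) = t⁻¹ * B.det ^ ((1 : ℝ) / d) := by
    rw [det_smul, Fintype.card_fin, Real.mul_rpow (by positivity) hB.det_nonneg, one_div,
      Real.pow_rpow_inv_natCast (by positivity) (NeZero.ne d)]
  have hb := bval_nonpos_of_bellman_nonpos h hmem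
  rw [bval, hroot, smul_mul, trace_smul, smul_eq_mul] at hb
  have hscaled : t⁻¹ * (F * B.det ^ ((1 : ℝ) / d)) ≤ t⁻¹ * (B * A).trace := by linarith
  exact le_of_mul_le_mul_left hscaled (inv_pos.2 ht)

lemma posSemidef_of_bellman_nonpos {d : ℕ} [NeZero d] {A : Matrix (Fin d) (Fin d) ℝ} {F : ℝ}
    (hA : A.IsHermitian) (hF : 0 ≤ F) (h : bellman d A F ≤ 0) : A.PosSemidef := by
  refine .of_dotProduct_mulVec_nonneg hA fun v => ?_
  have hvv : (vecMulVec v v).PosSemidef := by simpa using posSemidef_vecMulVec_self_star v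
  have key := mul_det_rpow_le_trace_mul_of_bellman_nonpos h hvv
  rw [vecMulVec_mul, trace_vecMulVec, dotProduct_comm, ← dotProduct_mulVec] at key
  simpa using (mul_nonneg hF (Real.rpow_nonneg hvv.det_nonneg _)).trans key

lemma le_det_add_smul_one_of_bellman_nonpos {d : ℕ} [NeZero d] {A : Matrix (Fin d) (Fin d) ℝ}
    {F : ℝ} (hA : A.PosSemidef) (hF : 0 ≤ F) (h : bellman d A F ≤ 0) {ε : ℝ} (hε : 0 < ε) :
    (F / d) ^ d ≤ (A + ε • 1).det := by
  set M := A + ε • (1 : Matrix (Fin d) (Fin d) ℝ)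
  have hM : M.PosDef := PosDef.posSemidef_add hA (PosDef.one.smul hε)
  have hMdet : 0 < M.det := hM.det_pos
  have hinvA : M⁻¹ * A = 1 - ε • M⁻¹ := by
    rw [show A = M - ε • 1 by simp [M], Matrix.mul_sub, nonsing_inv_mul _ hMdet.ne'.isUnit,
      Matrix.mul_smul, Matrix.mul_one]
  set z := M.det ^ ((1 : ℝ) / d)
  have hz : 0 < z := Real.rpow_pos_of_pos hMdet _
  have key : F / z ≤ d := calc
    F / z = F * M⁻¹.det ^ ((1 : ℝ) / d) := by
      rw [det_nonsing_inv, Ring.inverse_eq_inv', Real.inv_rpow hMdet.le, div_eq_mul_inv]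
    _ ≤ (M⁻¹ * A).trace := mul_det_rpow_le_trace_mul_of_bellman_nonpos h hM.inv.posSemidef
    _ = d - ε * M⁻¹.trace := by simp [hinvA, trace_sub]
    _ ≤ d := sub_le_self _ (mul_nonneg hε.le hM.inv.posSemidef.trace_nonneg)
  calc (F / d) ^ d ≤ z ^ d := by
        refine pow_le_pow_left₀ (div_nonneg hF d.cast_nonneg) ?_ d
        rwa [div_le_iff₀ (Nat.cast_pos.2 (Nat.pos_of_neZero d)), mul_comm, ← div_le_iff₀ hz]
    _ = M.det := by
        simp only [z, one_div]
        exact Real.rpow_inv_natCast_pow hMdet.le (NeZero.ne d)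

lemma hessianM_isHermitian {d : ℕ} {Ω : Set (Fin d → ℝ)} (hΩ : IsOpen Ω)
    {φ : (Fin d → ℝ) → ℝ} (hφ : ContDiffOn ℝ 2 φ Ω) {x : Fin d → ℝ} (hx : x ∈ Ω) :
    (hessianM d φ x).IsHermitian := by
  have hsymm := (hφ.contDiffAt (hΩ.mem_nhds hx)).isSymmSndFDerivAt (by simp)
  ext i j
  simpa [hessianM, iteratedFDeriv_two_apply] using hsymm.eq (Pi.single j 1) (Pi.single i 1)

theorem stmt_10_general (d : ℕ) (Ω : Set (Fin d → ℝ)) (hΩo : IsOpen Ω)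
    (f : (Fin d → ℝ) → ℝ) (hf0 : ∀ x ∈ Ω, 0 ≤ f x)
    (u : (Fin d → ℝ) → ℝ)
    (hsub : ∀ φ : (Fin d → ℝ) → ℝ, ContDiffOn ℝ 2 φ Ω →
      ∀ x ∈ Ω, IsLocalMaxOn (fun y => u y - φ y) Ω x →
        bellman d (hessianM d φ x) (f x) ≤ 0) :
    ∀ φ : (Fin d → ℝ) → ℝ, ContDiffOn ℝ 2 φ Ω → ConvexOn ℝ Ω φ →
      ∀ x ∈ Ω, IsLocalMaxOn (fun y => u y - φ y) Ω x →
        MAop d (hessianM d φ x) (f x) ≤ 0 := by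
  intro φ hφ _ x hx hmax
  obtain rfl | hd := eq_or_ne d 0
  · -- (f/0)^0 and the determinant of the empty matrix both equal 1
    simp [MAop]
  have : NeZero d := ⟨hd⟩
  have hbell := hsub φ hφ x hx hmax
  have hA := posSemidef_of_bellman_nonpos (hessianM_isHermitian hΩo hφ hx) (hf0 x hx) hbell
  rw [MAop, sub_nonpos]
  exact Matrix.le_det_of_forall_le_det_add_smul_one fun ε hε =>
    le_det_add_smul_one_of_bellman_nonpos hA (hf0 x hx) hbell hε

/-- A convex viscosity subsolution of the Bellman equation is a viscosity subsolution of
the Monge–Ampère equation on the set of convex functions. -/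
theorem stmt_10 (d : ℕ) (hd : 2 ≤ d) (Ω : Set (Fin d → ℝ)) (hΩo : IsOpen Ω)
    (hΩb : Bornology.IsBounded Ω)
    (f : (Fin d → ℝ) → ℝ) (hfc : ContinuousOn f Ω) (hf0 : ∀ x ∈ Ω, 0 ≤ f x)
    (u : (Fin d → ℝ) → ℝ) (husc : UpperSemicontinuousOn u Ω) (hucvx : ConvexOn ℝ Ω u)
    (hsub : ∀ φ : (Fin d → ℝ) → ℝ, ContDiffOn ℝ 2 φ Ω →
      ∀ x ∈ Ω, IsLocalMaxOn (fun y => u y - φ y) Ω x →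
        bellman d (hessianM d φ x) (f x) ≤ 0) :
    ∀ φ : (Fin d → ℝ) → ℝ, ContDiffOn ℝ 2 φ Ω → ConvexOn ℝ Ω φ →
      ∀ x ∈ Ω, IsLocalMaxOn (fun y => u y - φ y) Ω x →
        MAop d (hessianM d φ x) (f x) ≤ 0 :=
  stmt_10_general d Ω hΩo f hf0 u hsub
end
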